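/- arXiv:1609.01914 — 6 statements merged into one kernel-verified Lean document; each statement's English description precedes it below -/
import Mathlib

section
/- Let q be the 8-dimensional Lie algebra over a field k of characteristic 0 defined by the structure constants below, and let n be the linear span of {a₁, b₁, u, a₂, b₂}. Then n is a Lie ideal of q, and its lower central series is: ⁅n,n⁆ = span{u, a₂, b₂}, ⁅n,⁅n,n⁆⁆ = span{a₂, b₂}, and ⁅n,⁅n,⁅n,n⁆⁆⁆ = 0. In particular, n is a 5-dimensional non-abelian nilpotent Lie algebra. -/
/-- Structure constants of the 8-dimensional Lie algebra `q` with basis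
`(e, h, f, a₁, b₁, u, a₂, b₂)` (indexed by `Fin 8` in this order):
`qStruct i j` is the coordinate vector of the bracket `⁅basisᵢ, basisⱼ⁆`.
The only nonzero brackets of basis vectors (up to antisymmetry) are:
`⁅e,f⁆=h, ⁅h,e⁆=2e, ⁅h,f⁆=−2f, ⁅h,a₁⁆=a₁, ⁅h,b₁⁆=−b₁, ⁅e,b₁⁆=a₁, ⁅f,a₁⁆=b₁,
⁅h,a₂⁆=a₂, ⁅h,b₂⁆=−b₂, ⁅e,b₂⁆=a₂, ⁅f,a₂⁆=b₂, ⁅a₁,b₁⁆=u, ⁅a₁,u⁆=a₂, ⁅b₁,u⁆=b₂`. -/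
def qStruct {k : Type*} [Field k] : Fin 8 → Fin 8 → Fin 8 → k
  | 0, 2 => Pi.single 1 1       -- ⁅e,f⁆ = h
  | 2, 0 => Pi.single 1 (-1)
  | 1, 0 => Pi.single 0 2       -- ⁅h,e⁆ = 2e
  | 0, 1 => Pi.single 0 (-2)
  | 1, 2 => Pi.single 2 (-2)    -- ⁅h,f⁆ = -2f
  | 2, 1 => Pi.single 2 2
  | 1, 3 => Pi.single 3 1       -- ⁅h,a₁⁆ = a₁
  | 3, 1 => Pi.single 3 (-1)
  | 1, 4 => Pi.single 4 (-1)    -- ⁅h,b₁⁆ = -b₁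
  | 4, 1 => Pi.single 4 1
  | 0, 4 => Pi.single 3 1       -- ⁅e,b₁⁆ = a₁
  | 4, 0 => Pi.single 3 (-1)
  | 2, 3 => Pi.single 4 1       -- ⁅f,a₁⁆ = b₁
  | 3, 2 => Pi.single 4 (-1)
  | 1, 6 => Pi.single 6 1       -- ⁅h,a₂⁆ = a₂
  | 6, 1 => Pi.single 6 (-1)
  | 1, 7 => Pi.single 7 (-1)    -- ⁅h,b₂⁆ = -b₂
  | 7, 1 => Pi.single 7 1
  | 0, 7 => Pi.single 6 1       -- ⁅e,b₂⁆ = a₂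
  | 7, 0 => Pi.single 6 (-1)
  | 2, 6 => Pi.single 7 1       -- ⁅f,a₂⁆ = b₂
  | 6, 2 => Pi.single 7 (-1)
  | 3, 4 => Pi.single 5 1       -- ⁅a₁,b₁⁆ = u
  | 4, 3 => Pi.single 5 (-1)
  | 3, 5 => Pi.single 6 1       -- ⁅a₁,u⁆ = a₂
  | 5, 3 => Pi.single 6 (-1)
  | 4, 5 => Pi.single 7 1       -- ⁅b₁,u⁆ = b₂
  | 5, 4 => Pi.single 7 (-1)
  | _, _ => 0

/-- The alternating bilinear bracket on `k⁸` determined by the structure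
constants `qStruct`. -/
def qBracket {k : Type*} [Field k] (x y : Fin 8 → k) : Fin 8 → k :=
  ∑ i : Fin 8, ∑ j : Fin 8, (x i * y j) • qStruct i j


open Submodule in
/-- The span of all brackets `⁅x,y⁆` with `x ∈ A`, `y ∈ B`. -/
def brSpan {k : Type*} [Field k] (A B : Submodule k (Fin 8 → k)) :
    Submodule k (Fin 8 → k) :=
  Submodule.span k {z | ∃ x ∈ A, ∃ y ∈ B, z = qBracket x y}

/-- `n`, the span of `{a₁, b₁, u, a₂, b₂}` (basis indices `3,4,5,6,7`). -/
def nSub (k : Type*) [Field k] : Submodule k (Fin 8 → k) :=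
  Submodule.span k
    {Pi.single 3 1, Pi.single 4 1, Pi.single 5 1, Pi.single 6 1, Pi.single 7 1}

/-!
A span of standard basis vectors is the subspace of vectors vanishing at the other
coordinates. Writing the bracket out in coordinates turns every inclusion `⊆` of the
lower central series into the vanishing of a few coordinates, while `⊇` holds because
`u = ⁅a₁,b₁⁆`, `a₂ = ⁅a₁,u⁆` and `b₂ = ⁅b₁,u⁆`.
-/

open Submodule

theorem Module.Basis.finrank_span_image {ι R M : Type*} [Ring R] [Nontrivial R]
    [StrongRankCondition R] [AddCommGroup M] [Module R M] (b : Basis ι R M) (s : Finset ι) :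
    Module.finrank R (span R (b '' s)) = s.card := by
  rw [Set.image_eq_range]
  exact (finrank_span_eq_card (b.linearIndependent.comp _ Subtype.val_injective)).trans (by simp)

theorem mem_span_image_single_iff {ι k : Type*} [Fintype ι] [DecidableEq ι] [Semiring k]
    (s : Set ι) (x : ι → k) :
    x ∈ span k ((fun i => Pi.single i 1) '' s) ↔ ∀ i ∉ s, x i = 0 := by
  simp only [← Pi.basisFun_apply, (Pi.basisFun k ι).mem_span_image, Set.subset_def,
    Finset.mem_coe, Finsupp.mem_support_iff, Pi.basisFun_repr]
  exact forall_congr' fun i => not_imp_comm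

section

variable {k : Type*} [Field k]

theorem qBracket_eq (x y : Fin 8 → k) : qBracket x y =
    ![2 * x 1 * y 0 - 2 * x 0 * y 1, x 0 * y 2 - x 2 * y 0, 2 * x 2 * y 1 - 2 * x 1 * y 2,
      x 1 * y 3 - x 3 * y 1 + x 0 * y 4 - x 4 * y 0, x 4 * y 1 - x 1 * y 4 + x 2 * y 3 - x 3 * y 2,
      x 3 * y 4 - x 4 * y 3,
      x 1 * y 6 - x 6 * y 1 + x 0 * y 7 - x 7 * y 0 + x 3 * y 5 - x 5 * y 3,
      x 7 * y 1 - x 1 * y 7 + x 2 * y 6 - x 6 * y 2 + x 4 * y 5 - x 5 * y 4] := by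
  simp only [qBracket, Fin.sum_univ_eight, qStruct]
  ext c
  fin_cases c <;> simp <;> ring

theorem qBracket_single_single (i j : Fin 8) :
    qBracket (Pi.single i (1 : k)) (Pi.single j 1) = qStruct i j := by
  simp [qBracket, Pi.single_apply]

theorem brSpan_le_iff {A B C : Submodule k (Fin 8 → k)} :
    brSpan A B ≤ C ↔ ∀ x ∈ A, ∀ y ∈ B, qBracket x y ∈ C := by
  refine span_le.trans ⟨fun h x hx y hy => h ⟨x, hx, y, hy, rfl⟩, ?_⟩
  rintro h _ ⟨x, hx, y, hy, rfl⟩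
  exact h x hx y hy

theorem qBracket_mem_brSpan {A B : Submodule k (Fin 8 → k)} {x y : Fin 8 → k}
    (hx : x ∈ A) (hy : y ∈ B) : qBracket x y ∈ brSpan A B :=
  subset_span ⟨x, hx, y, hy, rfl⟩

theorem single_mem_brSpan {A B : Submodule k (Fin 8 → k)} {i j l : Fin 8}
    (h : qStruct i j = Pi.single l (1 : k)) (hi : Pi.single i 1 ∈ A) (hj : Pi.single j 1 ∈ B) :
    Pi.single l (1 : k) ∈ brSpan A B := by
  rw [← h, ← qBracket_single_single]
  exact qBracket_mem_brSpan hi hj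

theorem mem_nSub_iff (x : Fin 8 → k) :
    x ∈ nSub k ↔ ∀ i ∉ ({3, 4, 5, 6, 7} : Set (Fin 8)), x i = 0 := by
  rw [← mem_span_image_single_iff]
  simp [nSub, Set.image_insert_eq]

theorem mem_span_single_567_iff (x : Fin 8 → k) :
    x ∈ span k {Pi.single 5 1, Pi.single 6 1, Pi.single 7 1} ↔
      ∀ i ∉ ({5, 6, 7} : Set (Fin 8)), x i = 0 := by
  rw [← mem_span_image_single_iff]
  simp [Set.image_insert_eq]

theorem mem_span_single_67_iff (x : Fin 8 → k) :
    x ∈ span k {Pi.single 6 1, Pi.single 7 1} ↔ ∀ i ∉ ({6, 7} : Set (Fin 8)), x i = 0 := by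
  rw [← mem_span_image_single_iff]
  simp [Set.image_insert_eq]

theorem single_mem_nSub {i : Fin 8} (hi : i ∈ ({3, 4, 5, 6, 7} : Set (Fin 8))) :
    Pi.single i (1 : k) ∈ nSub k :=
  (mem_nSub_iff _).2 fun _ hj => Pi.single_eq_of_ne (by rintro rfl; exact hj hi) 1

theorem qBracket_mem_nSub (x : Fin 8 → k) {y : Fin 8 → k} (hy : y ∈ nSub k) :
    qBracket x y ∈ nSub k ∧ qBracket y x ∈ nSub k := by
  simp only [mem_nSub_iff] at hy ⊢
  constructor <;> intro i hi <;> fin_cases i <;> simp_all [qBracket_eq]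

theorem brSpan_nSub_nSub :
    brSpan (nSub k) (nSub k) = span k {Pi.single 5 1, Pi.single 6 1, Pi.single 7 1} := by
  apply le_antisymm
  · refine brSpan_le_iff.2 fun x hx y hy => ?_
    rw [mem_nSub_iff] at hx hy
    rw [mem_span_single_567_iff]
    intro i hi
    fin_cases i <;> simp_all [qBracket_eq]
  · have h3 : Pi.single 3 (1 : k) ∈ nSub k := single_mem_nSub (by simp)
    have h4 : Pi.single 4 (1 : k) ∈ nSub k := single_mem_nSub (by simp)
    have h5 : Pi.single 5 (1 : k) ∈ nSub k := single_mem_nSub (by simp)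
    rw [span_le]
    rintro _ (rfl | rfl | rfl)
    exacts [single_mem_brSpan (i := 3) rfl h3 h4, single_mem_brSpan (i := 3) rfl h3 h5,
      single_mem_brSpan (i := 4) rfl h4 h5]

theorem brSpan_nSub_span_single_567 :
    brSpan (nSub k) (span k {Pi.single 5 1, Pi.single 6 1, Pi.single 7 1}) =
      span k {Pi.single 6 1, Pi.single 7 1} := by
  apply le_antisymm
  · refine brSpan_le_iff.2 fun x hx y hy => ?_
    rw [mem_nSub_iff] at hx
    rw [mem_span_single_567_iff] at hy
    rw [mem_span_single_67_iff]
    intro i hi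
    fin_cases i <;> simp_all [qBracket_eq]
  · have h3 : Pi.single 3 (1 : k) ∈ nSub k := single_mem_nSub (by simp)
    have h4 : Pi.single 4 (1 : k) ∈ nSub k := single_mem_nSub (by simp)
    have h5 : (Pi.single 5 1 : Fin 8 → k) ∈
        span k {Pi.single 5 1, Pi.single 6 1, Pi.single 7 1} := subset_span (by simp)
    rw [span_le]
    rintro _ (rfl | rfl)
    exacts [single_mem_brSpan (i := 3) rfl h3 h5, single_mem_brSpan (i := 4) rfl h4 h5]

theorem brSpan_nSub_span_single_67 :
    brSpan (nSub k) (span k {Pi.single 6 1, Pi.single 7 1}) = ⊥ := by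
  refine eq_bot_iff.2 (brSpan_le_iff.2 fun x hx y hy => ?_)
  rw [mem_nSub_iff] at hx
  rw [mem_span_single_67_iff] at hy
  rw [mem_bot]
  funext i
  fin_cases i <;> simp_all [qBracket_eq]

theorem finrank_nSub : Module.finrank k (nSub k) = 5 := by
  have hn : nSub k = span k (Pi.basisFun k (Fin 8) '' ({3, 4, 5, 6, 7} : Finset (Fin 8))) := by
    simp [nSub, Set.image_insert_eq]
  rw [hn, Module.Basis.finrank_span_image]
  rfl

theorem brSpan_nSub_nSub_ne_bot : brSpan (nSub k) (nSub k) ≠ ⊥ :=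
  (Submodule.ne_bot_iff _).2 ⟨Pi.single 5 1,
    single_mem_brSpan (i := 3) (j := 4) rfl (single_mem_nSub (by simp))
      (single_mem_nSub (by simp)),
    Pi.single_ne_zero_iff.2 one_ne_zero⟩

end

theorem nSub_ideal_lcs_general (k : Type*) [Field k] :
    -- n is an ideal of q
    (∀ x : Fin 8 → k, ∀ y ∈ nSub k, qBracket x y ∈ nSub k ∧ qBracket y x ∈ nSub k) ∧
    -- ⁅n,n⁆ = span{u, a₂, b₂}
    brSpan (nSub k) (nSub k) =
      Submodule.span k {Pi.single 5 1, Pi.single 6 1, Pi.single 7 1} ∧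
    -- ⁅n,⁅n,n⁆⁆ = span{a₂, b₂}
    brSpan (nSub k) (brSpan (nSub k) (nSub k)) =
      Submodule.span k {Pi.single 6 1, Pi.single 7 1} ∧
    -- ⁅n,⁅n,⁅n,n⁆⁆⁆ = 0
    brSpan (nSub k) (brSpan (nSub k) (brSpan (nSub k) (nSub k))) = ⊥ ∧
    -- n is 5-dimensional and non-abelian
    Module.finrank k (nSub k) = 5 ∧
    brSpan (nSub k) (nSub k) ≠ ⊥ := by
  refine ⟨qBracket_mem_nSub, brSpan_nSub_nSub, ?_, ?_, finrank_nSub, brSpan_nSub_nSub_ne_bot⟩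
  · rw [brSpan_nSub_nSub, brSpan_nSub_span_single_567]
  · rw [brSpan_nSub_nSub, brSpan_nSub_span_single_567, brSpan_nSub_span_single_67]

/-- `n = span{a₁, b₁, u, a₂, b₂}` is a Lie ideal of `q`; its lower central series is
`⁅n,n⁆ = span{u, a₂, b₂}`, `⁅n,⁅n,n⁆⁆ = span{a₂, b₂}` and `⁅n,⁅n,⁅n,n⁆⁆⁆ = 0`.
In particular `n` is a 5-dimensional non-abelian nilpotent Lie algebra. -/
theorem nSub_ideal_lcs (k : Type*) [Field k] [CharZero k] :
    -- n is an ideal of q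
    (∀ x : Fin 8 → k, ∀ y ∈ nSub k, qBracket x y ∈ nSub k ∧ qBracket y x ∈ nSub k) ∧
    -- ⁅n,n⁆ = span{u, a₂, b₂}
    brSpan (nSub k) (nSub k) =
      Submodule.span k {Pi.single 5 1, Pi.single 6 1, Pi.single 7 1} ∧
    -- ⁅n,⁅n,n⁆⁆ = span{a₂, b₂}
    brSpan (nSub k) (brSpan (nSub k) (nSub k)) =
      Submodule.span k {Pi.single 6 1, Pi.single 7 1} ∧
    -- ⁅n,⁅n,⁅n,n⁆⁆⁆ = 0
    brSpan (nSub k) (brSpan (nSub k) (brSpan (nSub k) (nSub k))) = ⊥ ∧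
    -- n is 5-dimensional and non-abelian
    Module.finrank k (nSub k) = 5 ∧
    brSpan (nSub k) (nSub k) ≠ ⊥ :=
  nSub_ideal_lcs_general k
end

section
/- Let q be the 8-dimensional Lie algebra over a field k of characteristic 0 defined by the structure constants below. Then the index of q equals 2: for every ξ ∈ q* the coadjoint stabilizer q_ξ has dimension at least 2, and there exists ξ ∈ q* with dim q_ξ = 2. -/
lemma qBracket_add_left {k : Type*} [Field k] (a b y : Fin 8 → k) :
    qBracket (a + b) y = qBracket a y + qBracket b y := by
  simp [qBracket, add_mul, add_smul, Finset.sum_add_distrib]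

lemma qBracket_smul_left {k : Type*} [Field k] (c : k) (a y : Fin 8 → k) :
    qBracket (c • a) y = c • qBracket a y := by
  simp [qBracket, smul_smul, mul_assoc, Finset.smul_sum]

lemma qBracket_zero_left {k : Type*} [Field k] (y : Fin 8 → k) :
    qBracket 0 y = 0 := by
  simp [qBracket]

/-- The coadjoint stabiliser `q_ξ = {x ∈ q | ξ(⁅x,y⁆) = 0 for all y ∈ q}`. -/
def qStab {k : Type*} [Field k] (ξ : (Fin 8 → k) →ₗ[k] k) : Submodule k (Fin 8 → k) where
  carrier := {x | ∀ y, ξ (qBracket x y) = 0}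
  add_mem' := by
    intro a b ha hb y
    rw [qBracket_add_left, map_add, ha y, hb y, add_zero]
  zero_mem' := by
    intro y
    rw [qBracket_zero_left, map_zero]
  smul_mem' := by
    intro c a ha y
    rw [qBracket_smul_left, map_smul, ha y, smul_zero]


set_option linter.unusedSectionVars false

section QAux
variable {k : Type*} [Field k]

lemma qS00 {k : Type*} [Field k] : qStruct (k := k) 0 0 = 0 := rfl
lemma qS01 {k : Type*} [Field k] : qStruct (k := k) 0 1 = Pi.single 0 (-2) := rfl
lemma qS02 {k : Type*} [Field k] : qStruct (k := k) 0 2 = Pi.single 1 (1) := rfl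
lemma qS03 {k : Type*} [Field k] : qStruct (k := k) 0 3 = 0 := rfl
lemma qS04 {k : Type*} [Field k] : qStruct (k := k) 0 4 = Pi.single 3 (1) := rfl
lemma qS05 {k : Type*} [Field k] : qStruct (k := k) 0 5 = 0 := rfl
lemma qS06 {k : Type*} [Field k] : qStruct (k := k) 0 6 = 0 := rfl
lemma qS07 {k : Type*} [Field k] : qStruct (k := k) 0 7 = Pi.single 6 (1) := rfl
lemma qS10 {k : Type*} [Field k] : qStruct (k := k) 1 0 = Pi.single 0 (2) := rfl
lemma qS11 {k : Type*} [Field k] : qStruct (k := k) 1 1 = 0 := rfl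
lemma qS12 {k : Type*} [Field k] : qStruct (k := k) 1 2 = Pi.single 2 (-2) := rfl
lemma qS13 {k : Type*} [Field k] : qStruct (k := k) 1 3 = Pi.single 3 (1) := rfl
lemma qS14 {k : Type*} [Field k] : qStruct (k := k) 1 4 = Pi.single 4 (-1) := rfl
lemma qS15 {k : Type*} [Field k] : qStruct (k := k) 1 5 = 0 := rfl
lemma qS16 {k : Type*} [Field k] : qStruct (k := k) 1 6 = Pi.single 6 (1) := rfl
lemma qS17 {k : Type*} [Field k] : qStruct (k := k) 1 7 = Pi.single 7 (-1) := rfl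
lemma qS20 {k : Type*} [Field k] : qStruct (k := k) 2 0 = Pi.single 1 (-1) := rfl
lemma qS21 {k : Type*} [Field k] : qStruct (k := k) 2 1 = Pi.single 2 (2) := rfl
lemma qS22 {k : Type*} [Field k] : qStruct (k := k) 2 2 = 0 := rfl
lemma qS23 {k : Type*} [Field k] : qStruct (k := k) 2 3 = Pi.single 4 (1) := rfl
lemma qS24 {k : Type*} [Field k] : qStruct (k := k) 2 4 = 0 := rfl
lemma qS25 {k : Type*} [Field k] : qStruct (k := k) 2 5 = 0 := rfl
lemma qS26 {k : Type*} [Field k] : qStruct (k := k) 2 6 = Pi.single 7 (1) := rfl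
lemma qS27 {k : Type*} [Field k] : qStruct (k := k) 2 7 = 0 := rfl
lemma qS30 {k : Type*} [Field k] : qStruct (k := k) 3 0 = 0 := rfl
lemma qS31 {k : Type*} [Field k] : qStruct (k := k) 3 1 = Pi.single 3 (-1) := rfl
lemma qS32 {k : Type*} [Field k] : qStruct (k := k) 3 2 = Pi.single 4 (-1) := rfl
lemma qS33 {k : Type*} [Field k] : qStruct (k := k) 3 3 = 0 := rfl
lemma qS34 {k : Type*} [Field k] : qStruct (k := k) 3 4 = Pi.single 5 (1) := rfl
lemma qS35 {k : Type*} [Field k] : qStruct (k := k) 3 5 = Pi.single 6 (1) := rfl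
lemma qS36 {k : Type*} [Field k] : qStruct (k := k) 3 6 = 0 := rfl
lemma qS37 {k : Type*} [Field k] : qStruct (k := k) 3 7 = 0 := rfl
lemma qS40 {k : Type*} [Field k] : qStruct (k := k) 4 0 = Pi.single 3 (-1) := rfl
lemma qS41 {k : Type*} [Field k] : qStruct (k := k) 4 1 = Pi.single 4 (1) := rfl
lemma qS42 {k : Type*} [Field k] : qStruct (k := k) 4 2 = 0 := rfl
lemma qS43 {k : Type*} [Field k] : qStruct (k := k) 4 3 = Pi.single 5 (-1) := rfl
lemma qS44 {k : Type*} [Field k] : qStruct (k := k) 4 4 = 0 := rfl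
lemma qS45 {k : Type*} [Field k] : qStruct (k := k) 4 5 = Pi.single 7 (1) := rfl
lemma qS46 {k : Type*} [Field k] : qStruct (k := k) 4 6 = 0 := rfl
lemma qS47 {k : Type*} [Field k] : qStruct (k := k) 4 7 = 0 := rfl
lemma qS50 {k : Type*} [Field k] : qStruct (k := k) 5 0 = 0 := rfl
lemma qS51 {k : Type*} [Field k] : qStruct (k := k) 5 1 = 0 := rfl
lemma qS52 {k : Type*} [Field k] : qStruct (k := k) 5 2 = 0 := rfl
lemma qS53 {k : Type*} [Field k] : qStruct (k := k) 5 3 = Pi.single 6 (-1) := rfl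
lemma qS54 {k : Type*} [Field k] : qStruct (k := k) 5 4 = Pi.single 7 (-1) := rfl
lemma qS55 {k : Type*} [Field k] : qStruct (k := k) 5 5 = 0 := rfl
lemma qS56 {k : Type*} [Field k] : qStruct (k := k) 5 6 = 0 := rfl
lemma qS57 {k : Type*} [Field k] : qStruct (k := k) 5 7 = 0 := rfl
lemma qS60 {k : Type*} [Field k] : qStruct (k := k) 6 0 = 0 := rfl
lemma qS61 {k : Type*} [Field k] : qStruct (k := k) 6 1 = Pi.single 6 (-1) := rfl
lemma qS62 {k : Type*} [Field k] : qStruct (k := k) 6 2 = Pi.single 7 (-1) := rfl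
lemma qS63 {k : Type*} [Field k] : qStruct (k := k) 6 3 = 0 := rfl
lemma qS64 {k : Type*} [Field k] : qStruct (k := k) 6 4 = 0 := rfl
lemma qS65 {k : Type*} [Field k] : qStruct (k := k) 6 5 = 0 := rfl
lemma qS66 {k : Type*} [Field k] : qStruct (k := k) 6 6 = 0 := rfl
lemma qS67 {k : Type*} [Field k] : qStruct (k := k) 6 7 = 0 := rfl
lemma qS70 {k : Type*} [Field k] : qStruct (k := k) 7 0 = Pi.single 6 (-1) := rfl
lemma qS71 {k : Type*} [Field k] : qStruct (k := k) 7 1 = Pi.single 7 (1) := rfl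
lemma qS72 {k : Type*} [Field k] : qStruct (k := k) 7 2 = 0 := rfl
lemma qS73 {k : Type*} [Field k] : qStruct (k := k) 7 3 = 0 := rfl
lemma qS74 {k : Type*} [Field k] : qStruct (k := k) 7 4 = 0 := rfl
lemma qS75 {k : Type*} [Field k] : qStruct (k := k) 7 5 = 0 := rfl
lemma qS76 {k : Type*} [Field k] : qStruct (k := k) 7 6 = 0 := rfl
lemma qS77 {k : Type*} [Field k] : qStruct (k := k) 7 7 = 0 := rfl


/-- A convenient constructor for vectors in `Fin 8 → k`. -/
def vec8 (a0 a1 a2 a3 a4 a5 a6 a7 : k) : Fin 8 → k := ![a0, a1, a2, a3, a4, a5, a6, a7]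

@[simp] lemma vec8_0 (a0 a1 a2 a3 a4 a5 a6 a7 : k) : vec8 a0 a1 a2 a3 a4 a5 a6 a7 0 = a0 := rfl
@[simp] lemma vec8_1 (a0 a1 a2 a3 a4 a5 a6 a7 : k) : vec8 a0 a1 a2 a3 a4 a5 a6 a7 1 = a1 := rfl
@[simp] lemma vec8_2 (a0 a1 a2 a3 a4 a5 a6 a7 : k) : vec8 a0 a1 a2 a3 a4 a5 a6 a7 2 = a2 := rfl
@[simp] lemma vec8_3 (a0 a1 a2 a3 a4 a5 a6 a7 : k) : vec8 a0 a1 a2 a3 a4 a5 a6 a7 3 = a3 := rfl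
@[simp] lemma vec8_4 (a0 a1 a2 a3 a4 a5 a6 a7 : k) : vec8 a0 a1 a2 a3 a4 a5 a6 a7 4 = a4 := rfl
@[simp] lemma vec8_5 (a0 a1 a2 a3 a4 a5 a6 a7 : k) : vec8 a0 a1 a2 a3 a4 a5 a6 a7 5 = a5 := rfl
@[simp] lemma vec8_6 (a0 a1 a2 a3 a4 a5 a6 a7 : k) : vec8 a0 a1 a2 a3 a4 a5 a6 a7 6 = a6 := rfl
@[simp] lemma vec8_7 (a0 a1 a2 a3 a4 a5 a6 a7 : k) : vec8 a0 a1 a2 a3 a4 a5 a6 a7 7 = a7 := rfl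

lemma vec8_eta (x : Fin 8 → k) :
    vec8 (x 0) (x 1) (x 2) (x 3) (x 4) (x 5) (x 6) (x 7) = x := by
  funext i; fin_cases i <;> rfl

lemma vec8_smul_add (c d : k) (a0 a1 a2 a3 a4 a5 a6 a7 b0 b1 b2 b3 b4 b5 b6 b7 : k) :
    c • vec8 a0 a1 a2 a3 a4 a5 a6 a7 + d • vec8 b0 b1 b2 b3 b4 b5 b6 b7 =
      vec8 (c*a0+d*b0) (c*a1+d*b1) (c*a2+d*b2) (c*a3+d*b3) (c*a4+d*b4) (c*a5+d*b5) (c*a6+d*b6)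
        (c*a7+d*b7) := by
  funext i; fin_cases i <;> rfl

lemma vec8_congr {a0 a1 a2 a3 a4 a5 a6 a7 b0 b1 b2 b3 b4 b5 b6 b7 : k}
    (h0 : a0 = b0) (h1 : a1 = b1) (h2 : a2 = b2) (h3 : a3 = b3) (h4 : a4 = b4) (h5 : a5 = b5)
    (h6 : a6 = b6) (h7 : a7 = b7) :
    vec8 a0 a1 a2 a3 a4 a5 a6 a7 = vec8 b0 b1 b2 b3 b4 b5 b6 b7 := by
  subst h0 h1 h2 h3 h4 h5 h6 h7; rfl

lemma xi_single (ξ : (Fin 8 → k) →ₗ[k] k) (m : Fin 8) (c : k) :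
    ξ (Pi.single m c) = c * ξ (Pi.single m 1) := by
  have h : (Pi.single m c : Fin 8 → k) = c • (Pi.single m 1 : Fin 8 → k) := by
    funext j; by_cases hj : j = m <;> simp [Pi.single_apply, hj]
  rw [h, map_smul, smul_eq_mul]

set_option maxHeartbeats 1000000 in
lemma qBracket_key (ξ : (Fin 8 → k) →ₗ[k] k) (x y : Fin 8 → k) :
    ξ (qBracket x y) =
      (2*(x 1 * y 0 - x 0 * y 1)) * ξ (Pi.single 0 1)
      + (x 0 * y 2 - x 2 * y 0) * ξ (Pi.single 1 1)
      + (2*(x 2 * y 1 - x 1 * y 2)) * ξ (Pi.single 2 1)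
      + (x 1 * y 3 - x 3 * y 1 + x 0 * y 4 - x 4 * y 0) * ξ (Pi.single 3 1)
      + (x 4 * y 1 - x 1 * y 4 + x 2 * y 3 - x 3 * y 2) * ξ (Pi.single 4 1)
      + (x 3 * y 4 - x 4 * y 3) * ξ (Pi.single 5 1)
      + (x 1 * y 6 - x 6 * y 1 + x 0 * y 7 - x 7 * y 0 + x 3 * y 5 - x 5 * y 3) * ξ (Pi.single 6 1)
      + (x 7 * y 1 - x 1 * y 7 + x 2 * y 6 - x 6 * y 2 + x 4 * y 5 - x 5 * y 4) * ξ (Pi.single 7 1) := by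
  have hneg : ∀ m : Fin 8, ξ (Pi.single m (-1)) = -ξ (Pi.single m 1) := by
    intro m; rw [xi_single]; ring
  have h2 : ∀ m : Fin 8, ξ (Pi.single m (2:k)) = 2 * ξ (Pi.single m 1) := fun m => xi_single ξ m 2
  have hn2 : ∀ m : Fin 8, ξ (Pi.single m (-2:k)) = -2 * ξ (Pi.single m 1) := by
    intro m; rw [xi_single]
  simp only [qBracket, map_sum, map_smul, smul_eq_mul, Fin.sum_univ_eight,
    qS00, qS01, qS02, qS03, qS04, qS05, qS06, qS07, qS10, qS11, qS12, qS13, qS14, qS15, qS16, qS17, qS20, qS21, qS22, qS23, qS24, qS25, qS26, qS27, qS30, qS31, qS32, qS33, qS34, qS35, qS36, qS37, qS40, qS41, qS42, qS43, qS44, qS45, qS46, qS47, qS50, qS51, qS52, qS53, qS54, qS55, qS56, qS57, qS60, qS61, qS62, qS63, qS64, qS65, qS66, qS67, qS70, qS71, qS72, qS73, qS74, qS75, qS76, qS77,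
    map_add, map_zero, smul_zero, mul_zero, hneg, h2, hn2]
  ring

lemma mem_qStab_iff (ξ : (Fin 8 → k) →ₗ[k] k) (x : Fin 8 → k) :
    x ∈ qStab ξ ↔ ∀ y, ξ (qBracket x y) = 0 := Iff.rfl

lemma mem_qStab_of (ξ : (Fin 8 → k) →ₗ[k] k) (x : Fin 8 → k)
    (H : ∀ y : Fin 8 → k,
      (2*(x 1 * y 0 - x 0 * y 1)) * ξ (Pi.single 0 1)
      + (x 0 * y 2 - x 2 * y 0) * ξ (Pi.single 1 1)
      + (2*(x 2 * y 1 - x 1 * y 2)) * ξ (Pi.single 2 1)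
      + (x 1 * y 3 - x 3 * y 1 + x 0 * y 4 - x 4 * y 0) * ξ (Pi.single 3 1)
      + (x 4 * y 1 - x 1 * y 4 + x 2 * y 3 - x 3 * y 2) * ξ (Pi.single 4 1)
      + (x 3 * y 4 - x 4 * y 3) * ξ (Pi.single 5 1)
      + (x 1 * y 6 - x 6 * y 1 + x 0 * y 7 - x 7 * y 0 + x 3 * y 5 - x 5 * y 3) * ξ (Pi.single 6 1)
      + (x 7 * y 1 - x 1 * y 7 + x 2 * y 6 - x 6 * y 2 + x 4 * y 5 - x 5 * y 4) * ξ (Pi.single 7 1) = 0) :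
    x ∈ qStab ξ :=
  fun y => (qBracket_key ξ x y).trans (H y)

lemma finrank_span_pair_eq_two {a b : Fin 8 → k}
    (hli : ∀ c d : k, c • a + d • b = 0 → c = 0 ∧ d = 0) :
    Module.finrank k (Submodule.span k {a, b} : Submodule k (Fin 8 → k)) = 2 := by
  have h1 : ({a, b} : Set (Fin 8 → k)) = Set.range ![a, b] :=
    (Matrix.range_cons_cons_empty a b ![]).symm
  rw [h1, finrank_span_eq_card (LinearIndependent.pair_iff.2 hli)]
  simp

lemma two_le_finrank {S : Submodule k (Fin 8 → k)} {a b : Fin 8 → k}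
    (ha : a ∈ S) (hb : b ∈ S)
    (hli : ∀ c d : k, c • a + d • b = 0 → c = 0 ∧ d = 0) :
    2 ≤ Module.finrank k S := by
  have hspan : Submodule.span k {a, b} ≤ S := by
    rw [Submodule.span_le]
    rintro x (rfl | rfl)
    · exact ha
    · exact hb
  calc (2:ℕ) = Module.finrank k (Submodule.span k {a, b} : Submodule k (Fin 8 → k)) :=
        (finrank_span_pair_eq_two hli).symm
    _ ≤ Module.finrank k S := Submodule.finrank_mono hspan

end QAux

/-- The index of the Lie algebra `q` equals `2`: every coadjoint stabiliser has
dimension at least `2`, and some coadjoint stabiliser has dimension exactly `2`. -/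
theorem qIndex_eq_two (k : Type*) [Field k] [CharZero k] :
    (∀ ξ : (Fin 8 → k) →ₗ[k] k, 2 ≤ Module.finrank k (qStab ξ)) ∧
    (∃ ξ : (Fin 8 → k) →ₗ[k] k, Module.finrank k (qStab ξ) = 2) := by
  constructor
  · intro ξ
    by_cases h6 : ξ (Pi.single (6:Fin 8) (1:k)) = 0
    · by_cases h7 : ξ (Pi.single (7:Fin 8) (1:k)) = 0
      · -- both s₆ = s₇ = 0 : the vectors u', a₂' span a 2-dim subspace of the stabiliser
        refine two_le_finrank (a := vec8 (0:k) 0 0 0 0 1 0 0) (b := vec8 (0:k) 0 0 0 0 0 1 0)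
          ?_ ?_ ?_
        · refine mem_qStab_of _ _ (fun y => ?_)
          simp only [vec8_0, vec8_1, vec8_2, vec8_3, vec8_4, vec8_5, vec8_6, vec8_7]
          rw [h6, h7]; ring
        · refine mem_qStab_of _ _ (fun y => ?_)
          simp only [vec8_0, vec8_1, vec8_2, vec8_3, vec8_4, vec8_5, vec8_6, vec8_7]
          rw [h6, h7]; ring
        · intro c d h
          have h5 := congrFun h 5
          have h6' := congrFun h 6
          simp only [Pi.add_apply, Pi.smul_apply, vec8_5, vec8_6, smul_eq_mul, mul_one,
            mul_zero, add_zero, zero_add, Pi.zero_apply] at h5 h6'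
          exact ⟨h5, h6'⟩
      · -- s₆ = 0, s₇ ≠ 0
        refine two_le_finrank
          (a := vec8 (ξ (Pi.single 7 1)) 0 0 0 0 (ξ (Pi.single 3 1)) (ξ (Pi.single 1 1))
            (2 * ξ (Pi.single 0 1)))
          (b := vec8 (0:k) 0 0 (-(ξ (Pi.single 7 1))) (ξ (Pi.single 6 1)) (-(ξ (Pi.single 5 1)))
            (ξ (Pi.single 4 1)) (-(ξ (Pi.single 3 1)))) ?_ ?_ ?_
        · refine mem_qStab_of _ _ (fun y => ?_)
          simp only [vec8_0, vec8_1, vec8_2, vec8_3, vec8_4, vec8_5, vec8_6, vec8_7]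
          rw [h6]; ring
        · refine mem_qStab_of _ _ (fun y => ?_)
          simp only [vec8_0, vec8_1, vec8_2, vec8_3, vec8_4, vec8_5, vec8_6, vec8_7]
          ring
        · intro c d h
          have h0 := congrFun h 0
          have h3 := congrFun h 3
          simp only [Pi.add_apply, Pi.smul_apply, vec8_0, vec8_3, smul_eq_mul, mul_zero,
            add_zero, zero_add, Pi.zero_apply] at h0 h3
          have hc : c = 0 := by
            rcases mul_eq_zero.1 h0 with hc | hc
            · exact hc
            · exact absurd hc h7
          refine ⟨hc, ?_⟩
          rcases mul_eq_zero.1 h3 with hd | hd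
          · exact hd
          · exact absurd (neg_eq_zero.1 hd) h7
    · -- s₆ ≠ 0
      refine two_le_finrank
        (a := vec8 (-(ξ (Pi.single 7 1))^2) (-(ξ (Pi.single 6 1) * ξ (Pi.single 7 1)))
          ((ξ (Pi.single 6 1))^2) 0 0
          (ξ (Pi.single 4 1) * ξ (Pi.single 6 1) - ξ (Pi.single 3 1) * ξ (Pi.single 7 1))
          (2 * ξ (Pi.single 2 1) * ξ (Pi.single 6 1) - ξ (Pi.single 1 1) * ξ (Pi.single 7 1))
          (-(2 * ξ (Pi.single 0 1) * ξ (Pi.single 7 1) + ξ (Pi.single 1 1) * ξ (Pi.single 6 1))))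
        (b := vec8 (0:k) 0 0 (-(ξ (Pi.single 7 1))) (ξ (Pi.single 6 1)) (-(ξ (Pi.single 5 1)))
          (ξ (Pi.single 4 1)) (-(ξ (Pi.single 3 1)))) ?_ ?_ ?_
      · refine mem_qStab_of _ _ (fun y => ?_)
        simp only [vec8_0, vec8_1, vec8_2, vec8_3, vec8_4, vec8_5, vec8_6, vec8_7]
        ring
      · refine mem_qStab_of _ _ (fun y => ?_)
        simp only [vec8_0, vec8_1, vec8_2, vec8_3, vec8_4, vec8_5, vec8_6, vec8_7]
        ring
      · intro c d h
        have h2 := congrFun h 2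
        have h4 := congrFun h 4
        simp only [Pi.add_apply, Pi.smul_apply, vec8_2, vec8_4, smul_eq_mul, mul_zero,
          add_zero, zero_add, Pi.zero_apply] at h2 h4
        have hc : c = 0 := by
          rcases mul_eq_zero.1 h2 with hc | hc
          · exact hc
          · exact absurd (pow_eq_zero_iff (by norm_num) |>.1 hc) h6
        refine ⟨hc, ?_⟩
        rcases mul_eq_zero.1 h4 with hd | hd
        · exact hd
        · exact absurd hd h6
  · -- existence : take ξ = proj 6 + proj 7
    refine ⟨(LinearMap.proj 6 : (Fin 8 → k) →ₗ[k] k) + LinearMap.proj 7, ?_⟩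
    set ξ : (Fin 8 → k) →ₗ[k] k := (LinearMap.proj 6 : (Fin 8 → k) →ₗ[k] k) + LinearMap.proj 7
      with hξ
    have hzero : ∀ m : Fin 8, m ≠ 6 → m ≠ 7 → ξ (Pi.single m (1:k)) = 0 := by
      intro m hm6 hm7
      rw [hξ]
      simp only [LinearMap.add_apply, LinearMap.proj_apply]
      rw [Pi.single_eq_of_ne (by simpa using (Ne.symm hm6)),
        Pi.single_eq_of_ne (by simpa using (Ne.symm hm7)), add_zero]
    have h0 : ξ (Pi.single (0:Fin 8) (1:k)) = 0 := hzero 0 (by decide) (by decide)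
    have h1 : ξ (Pi.single (1:Fin 8) (1:k)) = 0 := hzero 1 (by decide) (by decide)
    have h2 : ξ (Pi.single (2:Fin 8) (1:k)) = 0 := hzero 2 (by decide) (by decide)
    have h3 : ξ (Pi.single (3:Fin 8) (1:k)) = 0 := hzero 3 (by decide) (by decide)
    have h4 : ξ (Pi.single (4:Fin 8) (1:k)) = 0 := hzero 4 (by decide) (by decide)
    have h5 : ξ (Pi.single (5:Fin 8) (1:k)) = 0 := hzero 5 (by decide) (by decide)
    have h6 : ξ (Pi.single (6:Fin 8) (1:k)) = 1 := by
      rw [hξ]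
      simp only [LinearMap.add_apply, LinearMap.proj_apply]
      rw [Pi.single_eq_same, Pi.single_eq_of_ne (by decide), add_zero]
    have h7 : ξ (Pi.single (7:Fin 8) (1:k)) = 1 := by
      rw [hξ]
      simp only [LinearMap.add_apply, LinearMap.proj_apply]
      rw [Pi.single_eq_same, Pi.single_eq_of_ne (by decide), zero_add]
    have hli : ∀ c d : k, c • vec8 (1:k) 1 (-1) 0 0 0 0 0 + d • vec8 (0:k) 0 0 1 (-1) 0 0 0 = 0 →
        c = 0 ∧ d = 0 := by
      intro c d h
      have e0 := congrFun h 0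
      have e3 := congrFun h 3
      simp only [Pi.add_apply, Pi.smul_apply, vec8_0, vec8_3, smul_eq_mul, mul_zero, mul_one,
        add_zero, zero_add, Pi.zero_apply] at e0 e3
      exact ⟨e0, e3⟩
    have hstab : qStab ξ = Submodule.span k
        {vec8 (1:k) 1 (-1) 0 0 0 0 0, vec8 (0:k) 0 0 1 (-1) 0 0 0} := by
      apply le_antisymm
      · intro x hx
        rw [mem_qStab_iff] at hx
        have E : ∀ y : Fin 8 → k,
            (2*(x 1 * y 0 - x 0 * y 1)) * ξ (Pi.single 0 1)
            + (x 0 * y 2 - x 2 * y 0) * ξ (Pi.single 1 1)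
            + (2*(x 2 * y 1 - x 1 * y 2)) * ξ (Pi.single 2 1)
            + (x 1 * y 3 - x 3 * y 1 + x 0 * y 4 - x 4 * y 0) * ξ (Pi.single 3 1)
            + (x 4 * y 1 - x 1 * y 4 + x 2 * y 3 - x 3 * y 2) * ξ (Pi.single 4 1)
            + (x 3 * y 4 - x 4 * y 3) * ξ (Pi.single 5 1)
            + (x 1 * y 6 - x 6 * y 1 + x 0 * y 7 - x 7 * y 0 + x 3 * y 5 - x 5 * y 3)
              * ξ (Pi.single 6 1)
            + (x 7 * y 1 - x 1 * y 7 + x 2 * y 6 - x 6 * y 2 + x 4 * y 5 - x 5 * y 4)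
              * ξ (Pi.single 7 1) = 0 :=
          fun y => (qBracket_key ξ x y).symm.trans (hx y)
        have E0 := E (vec8 (1:k) 0 0 0 0 0 0 0)
        have E1 := E (vec8 (0:k) 1 0 0 0 0 0 0)
        have E2 := E (vec8 (0:k) 0 1 0 0 0 0 0)
        have E3 := E (vec8 (0:k) 0 0 1 0 0 0 0)
        have E4 := E (vec8 (0:k) 0 0 0 1 0 0 0)
        have E5 := E (vec8 (0:k) 0 0 0 0 1 0 0)
        have E6 := E (vec8 (0:k) 0 0 0 0 0 1 0)
        have E7 := E (vec8 (0:k) 0 0 0 0 0 0 1)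
        simp only [vec8_0, vec8_1, vec8_2, vec8_3, vec8_4, vec8_5, vec8_6, vec8_7,
          h0, h1, h2, h3, h4, h5, h6, h7] at E0 E1 E2 E3 E4 E5 E6 E7
        ring_nf at E0 E1 E2 E3 E4 E5 E6 E7
        rw [Submodule.mem_span_pair]
        refine ⟨x 1, x 3, ?_⟩
        rw [vec8_smul_add]
        conv_rhs => rw [← vec8_eta x]
        exact vec8_congr (by linear_combination -E7) (by ring) (by linear_combination -E6)
          (by ring) (by linear_combination -E5) (by linear_combination E3)
          (by linear_combination E2) (by linear_combination E0)
      · rw [Submodule.span_le]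
        rintro z (rfl | rfl)
        · refine mem_qStab_of _ _ (fun y => ?_)
          simp only [vec8_0, vec8_1, vec8_2, vec8_3, vec8_4, vec8_5, vec8_6, vec8_7,
            h0, h1, h2, h3, h4, h5, h6, h7]
          ring
        · refine mem_qStab_of _ _ (fun y => ?_)
          simp only [vec8_0, vec8_1, vec8_2, vec8_3, vec8_4, vec8_5, vec8_6, vec8_7,
            h0, h1, h2, h3, h4, h5, h6, h7]
          ring
    rw [hstab]
    exact finrank_span_pair_eq_two hli
end

section
/- With the Lie–Poisson bracket on the polynomial ring k[x_e, x_h, x_f, x_{a₁}, x_{b₁}, x_u, x_{a₂}, x_{b₂}] associated with the Lie algebra q, the polynomial H₂ = x_{b₂}²·x_e + x_{a₂}·x_{b₂}·x_h − x_{a₂}²·x_f + x_u·(x_{a₁}·x_{b₂} − x_{a₂}·x_{b₁}) + (1/3)·x_u³ is invariant under the sl₂-triple: {x_e, H₂} = 0, {x_h, H₂} = 0, and {x_f, H₂} = 0. -/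
open MvPolynomial in
/-- The Lie–Poisson bracket on `k[x_e, x_h, x_f, x_{a₁}, x_{b₁}, x_u, x_{a₂}, x_{b₂}]`
associated with the Lie algebra `q`:
`{F, G} = Σ_{i,j} x_{⁅i,j⁆} · (∂F/∂x_i) · (∂G/∂x_j)`, where `x_{⁅i,j⁆}` is the
degree-1 polynomial obtained by expanding `⁅basisᵢ, basisⱼ⁆` in the basis and
replacing each basis vector by its coordinate variable. -/
noncomputable def liePoisson {k : Type*} [Field k]
    (F G : MvPolynomial (Fin 8) k) : MvPolynomial (Fin 8) k :=
  ∑ i : Fin 8, ∑ j : Fin 8,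
    (∑ m : Fin 8, C (qStruct i j m) * X m) * pderiv i F * pderiv j G

lemma qS_0_0 {k : Type*} [Field k] : qStruct (0:Fin 8) 0 = (0 : Fin 8 → k) := rfl
lemma qS_0_1 {k : Type*} [Field k] : qStruct (0:Fin 8) 1 = (Pi.single 0 (-2) : Fin 8 → k) := rfl
lemma qS_0_2 {k : Type*} [Field k] : qStruct (0:Fin 8) 2 = (Pi.single 1 (1) : Fin 8 → k) := rfl
lemma qS_0_3 {k : Type*} [Field k] : qStruct (0:Fin 8) 3 = (0 : Fin 8 → k) := rfl
lemma qS_0_4 {k : Type*} [Field k] : qStruct (0:Fin 8) 4 = (Pi.single 3 (1) : Fin 8 → k) := rfl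
lemma qS_0_5 {k : Type*} [Field k] : qStruct (0:Fin 8) 5 = (0 : Fin 8 → k) := rfl
lemma qS_0_6 {k : Type*} [Field k] : qStruct (0:Fin 8) 6 = (0 : Fin 8 → k) := rfl
lemma qS_0_7 {k : Type*} [Field k] : qStruct (0:Fin 8) 7 = (Pi.single 6 (1) : Fin 8 → k) := rfl
lemma qS_1_0 {k : Type*} [Field k] : qStruct (1:Fin 8) 0 = (Pi.single 0 (2) : Fin 8 → k) := rfl
lemma qS_1_1 {k : Type*} [Field k] : qStruct (1:Fin 8) 1 = (0 : Fin 8 → k) := rfl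
lemma qS_1_2 {k : Type*} [Field k] : qStruct (1:Fin 8) 2 = (Pi.single 2 (-2) : Fin 8 → k) := rfl
lemma qS_1_3 {k : Type*} [Field k] : qStruct (1:Fin 8) 3 = (Pi.single 3 (1) : Fin 8 → k) := rfl
lemma qS_1_4 {k : Type*} [Field k] : qStruct (1:Fin 8) 4 = (Pi.single 4 (-1) : Fin 8 → k) := rfl
lemma qS_1_5 {k : Type*} [Field k] : qStruct (1:Fin 8) 5 = (0 : Fin 8 → k) := rfl
lemma qS_1_6 {k : Type*} [Field k] : qStruct (1:Fin 8) 6 = (Pi.single 6 (1) : Fin 8 → k) := rfl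
lemma qS_1_7 {k : Type*} [Field k] : qStruct (1:Fin 8) 7 = (Pi.single 7 (-1) : Fin 8 → k) := rfl
lemma qS_2_0 {k : Type*} [Field k] : qStruct (2:Fin 8) 0 = (Pi.single 1 (-1) : Fin 8 → k) := rfl
lemma qS_2_1 {k : Type*} [Field k] : qStruct (2:Fin 8) 1 = (Pi.single 2 (2) : Fin 8 → k) := rfl
lemma qS_2_2 {k : Type*} [Field k] : qStruct (2:Fin 8) 2 = (0 : Fin 8 → k) := rfl
lemma qS_2_3 {k : Type*} [Field k] : qStruct (2:Fin 8) 3 = (Pi.single 4 (1) : Fin 8 → k) := rfl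
lemma qS_2_4 {k : Type*} [Field k] : qStruct (2:Fin 8) 4 = (0 : Fin 8 → k) := rfl
lemma qS_2_5 {k : Type*} [Field k] : qStruct (2:Fin 8) 5 = (0 : Fin 8 → k) := rfl
lemma qS_2_6 {k : Type*} [Field k] : qStruct (2:Fin 8) 6 = (Pi.single 7 (1) : Fin 8 → k) := rfl
lemma qS_2_7 {k : Type*} [Field k] : qStruct (2:Fin 8) 7 = (0 : Fin 8 → k) := rfl

open MvPolynomial in
lemma dG_0 {k : Type*} [Field k] [CharZero k] :
    pderiv 0 (X 7 ^ 2 * X 0 + X 6 * X 7 * X 1 - X 6 ^ 2 * X 2 + X 5 * (X 3 * X 7 - X 6 * X 4) + C ((1 : k) / 3) * X 5 ^ 3 : MvPolynomial (Fin 8) k) = X 7 ^ 2 := by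
  simp only [map_add, map_sub, Derivation.leibniz, Derivation.leibniz_pow, pderiv_X,
    pderiv_C, Pi.single_apply, smul_eq_mul]
  simp
  try ring
  try (rw [← map_ofNat (C : k →+* MvPolynomial (Fin 8) k) 3, mul_comm, ← mul_assoc, ← C_mul]
       norm_num)
open MvPolynomial in
lemma dG_1 {k : Type*} [Field k] [CharZero k] :
    pderiv 1 (X 7 ^ 2 * X 0 + X 6 * X 7 * X 1 - X 6 ^ 2 * X 2 + X 5 * (X 3 * X 7 - X 6 * X 4) + C ((1 : k) / 3) * X 5 ^ 3 : MvPolynomial (Fin 8) k) = X 6 * X 7 := by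
  simp only [map_add, map_sub, Derivation.leibniz, Derivation.leibniz_pow, pderiv_X,
    pderiv_C, Pi.single_apply, smul_eq_mul]
  simp
  try ring
  try (rw [← map_ofNat (C : k →+* MvPolynomial (Fin 8) k) 3, mul_comm, ← mul_assoc, ← C_mul]
       norm_num)
open MvPolynomial in
lemma dG_2 {k : Type*} [Field k] [CharZero k] :
    pderiv 2 (X 7 ^ 2 * X 0 + X 6 * X 7 * X 1 - X 6 ^ 2 * X 2 + X 5 * (X 3 * X 7 - X 6 * X 4) + C ((1 : k) / 3) * X 5 ^ 3 : MvPolynomial (Fin 8) k) = - X 6 ^ 2 := by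
  simp only [map_add, map_sub, Derivation.leibniz, Derivation.leibniz_pow, pderiv_X,
    pderiv_C, Pi.single_apply, smul_eq_mul]
  simp
  try ring
  try (rw [← map_ofNat (C : k →+* MvPolynomial (Fin 8) k) 3, mul_comm, ← mul_assoc, ← C_mul]
       norm_num)
open MvPolynomial in
lemma dG_3 {k : Type*} [Field k] [CharZero k] :
    pderiv 3 (X 7 ^ 2 * X 0 + X 6 * X 7 * X 1 - X 6 ^ 2 * X 2 + X 5 * (X 3 * X 7 - X 6 * X 4) + C ((1 : k) / 3) * X 5 ^ 3 : MvPolynomial (Fin 8) k) = X 5 * X 7 := by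
  simp only [map_add, map_sub, Derivation.leibniz, Derivation.leibniz_pow, pderiv_X,
    pderiv_C, Pi.single_apply, smul_eq_mul]
  simp
  try ring
  try (rw [← map_ofNat (C : k →+* MvPolynomial (Fin 8) k) 3, mul_comm, ← mul_assoc, ← C_mul]
       norm_num)
open MvPolynomial in
lemma dG_4 {k : Type*} [Field k] [CharZero k] :
    pderiv 4 (X 7 ^ 2 * X 0 + X 6 * X 7 * X 1 - X 6 ^ 2 * X 2 + X 5 * (X 3 * X 7 - X 6 * X 4) + C ((1 : k) / 3) * X 5 ^ 3 : MvPolynomial (Fin 8) k) = - (X 5 * X 6) := by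
  simp only [map_add, map_sub, Derivation.leibniz, Derivation.leibniz_pow, pderiv_X,
    pderiv_C, Pi.single_apply, smul_eq_mul]
  simp
  try ring
  try (rw [← map_ofNat (C : k →+* MvPolynomial (Fin 8) k) 3, mul_comm, ← mul_assoc, ← C_mul]
       norm_num)
open MvPolynomial in
lemma dG_5 {k : Type*} [Field k] [CharZero k] :
    pderiv 5 (X 7 ^ 2 * X 0 + X 6 * X 7 * X 1 - X 6 ^ 2 * X 2 + X 5 * (X 3 * X 7 - X 6 * X 4) + C ((1 : k) / 3) * X 5 ^ 3 : MvPolynomial (Fin 8) k) = X 3 * X 7 - X 6 * X 4 + X 5 ^ 2 := by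
  simp only [map_add, map_sub, Derivation.leibniz, Derivation.leibniz_pow, pderiv_X,
    pderiv_C, Pi.single_apply, smul_eq_mul]
  simp
  try ring
  try (rw [← map_ofNat (C : k →+* MvPolynomial (Fin 8) k) 3, mul_comm, ← mul_assoc, ← C_mul]
       norm_num)
open MvPolynomial in
lemma dG_6 {k : Type*} [Field k] [CharZero k] :
    pderiv 6 (X 7 ^ 2 * X 0 + X 6 * X 7 * X 1 - X 6 ^ 2 * X 2 + X 5 * (X 3 * X 7 - X 6 * X 4) + C ((1 : k) / 3) * X 5 ^ 3 : MvPolynomial (Fin 8) k) = X 7 * X 1 - 2 * X 6 * X 2 - X 5 * X 4 := by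
  simp only [map_add, map_sub, Derivation.leibniz, Derivation.leibniz_pow, pderiv_X,
    pderiv_C, Pi.single_apply, smul_eq_mul]
  simp
  try ring
  try (rw [← map_ofNat (C : k →+* MvPolynomial (Fin 8) k) 3, mul_comm, ← mul_assoc, ← C_mul]
       norm_num)
open MvPolynomial in
lemma dG_7 {k : Type*} [Field k] [CharZero k] :
    pderiv 7 (X 7 ^ 2 * X 0 + X 6 * X 7 * X 1 - X 6 ^ 2 * X 2 + X 5 * (X 3 * X 7 - X 6 * X 4) + C ((1 : k) / 3) * X 5 ^ 3 : MvPolynomial (Fin 8) k) = 2 * X 7 * X 0 + X 6 * X 1 + X 5 * X 3 := by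
  simp only [map_add, map_sub, Derivation.leibniz, Derivation.leibniz_pow, pderiv_X,
    pderiv_C, Pi.single_apply, smul_eq_mul]
  simp
  try ring
  try (rw [← map_ofNat (C : k →+* MvPolynomial (Fin 8) k) 3, mul_comm, ← mul_assoc, ← C_mul]
       norm_num)

open MvPolynomial in
lemma sum_single {k : Type*} [Field k] (p : Fin 8) (c : k) :
    ∑ m : Fin 8, C ((Pi.single p c : Fin 8 → k) m) * X m = C c * X p := by
  rw [Finset.sum_eq_single p] <;> simp_all [Pi.single_apply]

open MvPolynomial in
lemma sum_zero {k : Type*} [Field k] :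
    ∑ m : Fin 8, C ((0 : Fin 8 → k) m) * X m = 0 := by simp

open MvPolynomial in
lemma lp_X {k : Type*} [Field k] (t : Fin 8) (G : MvPolynomial (Fin 8) k) :
    liePoisson (X t) G = ∑ j : Fin 8, (∑ m : Fin 8, C (qStruct t j m) * X m) * pderiv j G := by
  rw [liePoisson, Finset.sum_eq_single t]
  · simp [pderiv_X_self]
  · intro i _ hi
    simp [pderiv_X_of_ne (Ne.symm hi)]
  · simp

open MvPolynomial in
lemma liePoisson_aux (k : Type*) [Field k] [CharZero k] (t : Fin 8) (ht : t = 0 ∨ t = 1 ∨ t = 2) :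
    liePoisson (X t)
      (X 7 ^ 2 * X 0 + X 6 * X 7 * X 1 - X 6 ^ 2 * X 2
        + X 5 * (X 3 * X 7 - X 6 * X 4) + C ((1 : k) / 3) * X 5 ^ 3) = 0 := by
  obtain rfl | rfl | rfl := ht <;>
  · rw [lp_X, Fin.sum_univ_eight]
    simp only [qS_0_0, qS_0_1, qS_0_2, qS_0_3, qS_0_4, qS_0_5, qS_0_6, qS_0_7, qS_1_0, qS_1_1, qS_1_2, qS_1_3, qS_1_4, qS_1_5, qS_1_6, qS_1_7, qS_2_0, qS_2_1, qS_2_2, qS_2_3, qS_2_4, qS_2_5, qS_2_6, qS_2_7, dG_0, dG_1, dG_2, dG_3, dG_4, dG_5, dG_6, dG_7, sum_single, sum_zero]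
    push_cast [map_neg, map_one, map_ofNat]
    ring

open MvPolynomial in
/-- `H₂ = x_{b₂}²·x_e + x_{a₂}·x_{b₂}·x_h − x_{a₂}²·x_f + x_u·(x_{a₁}·x_{b₂} − x_{a₂}·x_{b₁})
+ (1/3)·x_u³` is invariant under the sl₂-triple `{e, h, f}` for the Lie–Poisson
bracket: `{x_e, H₂} = {x_h, H₂} = {x_f, H₂} = 0`. -/
theorem liePoisson_sl2_H2 (k : Type*) [Field k] [CharZero k] :
    (liePoisson (X 0)
      (X 7 ^ 2 * X 0 + X 6 * X 7 * X 1 - X 6 ^ 2 * X 2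
        + X 5 * (X 3 * X 7 - X 6 * X 4) + C ((1 : k) / 3) * X 5 ^ 3) = 0) ∧
    (liePoisson (X 1)
      (X 7 ^ 2 * X 0 + X 6 * X 7 * X 1 - X 6 ^ 2 * X 2
        + X 5 * (X 3 * X 7 - X 6 * X 4) + C ((1 : k) / 3) * X 5 ^ 3) = 0) ∧
    (liePoisson (X 2)
      (X 7 ^ 2 * X 0 + X 6 * X 7 * X 1 - X 6 ^ 2 * X 2
        + X 5 * (X 3 * X 7 - X 6 * X 4) + C ((1 : k) / 3) * X 5 ^ 3) = 0) := by
  exact ⟨liePoisson_aux k 0 (by decide), liePoisson_aux k 1 (by decide),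
    liePoisson_aux k 2 (by decide)⟩
end

section
/- With the Lie–Poisson bracket on the polynomial ring k[x_e, x_h, x_f, x_{a₁}, x_{b₁}, x_u, x_{a₂}, x_{b₂}] associated with the Lie algebra q, the polynomial H₂ = x_{b₂}²·x_e + x_{a₂}·x_{b₂}·x_h − x_{a₂}²·x_f + x_u·(x_{a₁}·x_{b₂} − x_{a₂}·x_{b₁}) + (1/3)·x_u³ satisfies {x_{a₁}, H₂} = 0. -/
set_option maxHeartbeats 1000000


open MvPolynomial in
/-- `H₂ = x_{b₂}²·x_e + x_{a₂}·x_{b₂}·x_h − x_{a₂}²·x_f + x_u·(x_{a₁}·x_{b₂} − x_{a₂}·x_{b₁})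
+ (1/3)·x_u³` satisfies `{x_{a₁}, H₂} = 0` for the Lie–Poisson bracket. -/
theorem liePoisson_a1_H2 (k : Type*) [Field k] [CharZero k] :
    liePoisson (X 3)
      (X 7 ^ 2 * X 0 + X 6 * X 7 * X 1 - X 6 ^ 2 * X 2
        + X 5 * (X 3 * X 7 - X 6 * X 4) + C ((1 : k) / 3) * X 5 ^ 3
        : MvPolynomial (Fin 8) k) = 0 := by
  have h31 : (qStruct (k:=k) 3 1) = Pi.single 3 (-1) := rfl
  have h32 : (qStruct (k:=k) 3 2) = Pi.single 4 (-1) := rfl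
  have h34 : (qStruct (k:=k) 3 4) = Pi.single 5 1 := rfl
  have h35 : (qStruct (k:=k) 3 5) = Pi.single 6 1 := rfl
  have h30 : (qStruct (k:=k) 3 0) = 0 := rfl
  have h33 : (qStruct (k:=k) 3 3) = 0 := rfl
  have h36 : (qStruct (k:=k) 3 6) = 0 := rfl
  have h37 : (qStruct (k:=k) 3 7) = 0 := rfl
  simp only [liePoisson, Fin.sum_univ_eight, pderiv_X_self,
    pderiv_X_of_ne (by decide : (3:Fin 8) ≠ 0), pderiv_X_of_ne (by decide : (3:Fin 8) ≠ 1),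
    pderiv_X_of_ne (by decide : (3:Fin 8) ≠ 2), pderiv_X_of_ne (by decide : (3:Fin 8) ≠ 4),
    pderiv_X_of_ne (by decide : (3:Fin 8) ≠ 5), pderiv_X_of_ne (by decide : (3:Fin 8) ≠ 6),
    pderiv_X_of_ne (by decide : (3:Fin 8) ≠ 7), mul_zero, zero_mul, zero_add, add_zero, mul_one,
    h30, h31, h32, h33, h34, h35, h36, h37]
  simp (config := { decide := true }) only [Pi.single_apply, Pi.zero_apply, map_zero,
    zero_mul, add_zero, zero_add, map_one, one_mul, map_neg, neg_mul, if_true, if_false,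
    Derivation.leibniz, Derivation.leibniz_pow, map_add, map_sub, map_mul,
    pderiv_X, pderiv_C, smul_eq_mul, mul_zero, mul_one, nsmul_eq_mul, Nat.cast_ofNat]
  ring_nf
  have h3 : (C ((1:k)/3) : MvPolynomial (Fin 8) k) * 3 = 1 := by
    rw [show (3 : MvPolynomial (Fin 8) k) = C (3:k) from (map_ofNat C 3).symm, ← C_mul]
    norm_num
  linear_combination (X 5 : MvPolynomial (Fin 8) k) ^ 2 * X 6 * h3
end

section
/- In the multivariate polynomial ring over a field k of characteristic 0 in the eight variables x_e, x_h, x_f, x_{a₁}, x_{b₁}, x_u, x_{a₂}, x_{b₂}, the two polynomials H₁ = 2·x_{a₁}·x_{b₂} − 2·x_{b₁}·x_{a₂} + x_u² and H₂ = x_{b₂}²·x_e + x_{a₂}·x_{b₂}·x_h − x_{a₂}²·x_f + x_u·(x_{a₁}·x_{b₂} − x_{a₂}·x_{b₁}) + (1/3)·x_u³ are algebraically independent over k. -/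
open MvPolynomial in
/-- In `k[x_e, x_h, x_f, x_{a₁}, x_{b₁}, x_u, x_{a₂}, x_{b₂}]` (variables indexed by
`Fin 8` in this order), the polynomials
`H₁ = 2·x_{a₁}·x_{b₂} − 2·x_{b₁}·x_{a₂} + x_u²` and
`H₂ = x_{b₂}²·x_e + x_{a₂}·x_{b₂}·x_h − x_{a₂}²·x_f + x_u·(x_{a₁}·x_{b₂} − x_{a₂}·x_{b₁})
+ (1/3)·x_u³` are algebraically independent over `k`. -/
theorem H1_H2_algebraicIndependent (k : Type*) [Field k] [CharZero k] :
    AlgebraicIndependent k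
      ![(2 * X 3 * X 7 - 2 * X 4 * X 6 + X 5 ^ 2 : MvPolynomial (Fin 8) k),
        (X 7 ^ 2 * X 0 + X 6 * X 7 * X 1 - X 6 ^ 2 * X 2
          + X 5 * (X 3 * X 7 - X 6 * X 4) + C ((1 : k) / 3) * X 5 ^ 3
          : MvPolynomial (Fin 8) k)] := by
  set v : Fin 8 → MvPolynomial (Fin 2) k :=
    fun i => if i = 0 then X 1 else if i = 3 then C ((1:k)/2) * X 0
      else if i = 7 then 1 else 0 with hv
  apply AlgebraicIndependent.of_comp
    (aeval v : MvPolynomial (Fin 8) k →ₐ[k] MvPolynomial (Fin 2) k)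
  have h : (aeval v : MvPolynomial (Fin 8) k →ₐ[k] MvPolynomial (Fin 2) k) ∘
      ![(2 * X 3 * X 7 - 2 * X 4 * X 6 + X 5 ^ 2 : MvPolynomial (Fin 8) k),
        (X 7 ^ 2 * X 0 + X 6 * X 7 * X 1 - X 6 ^ 2 * X 2
          + X 5 * (X 3 * X 7 - X 6 * X 4) + C ((1 : k) / 3) * X 5 ^ 3
          : MvPolynomial (Fin 8) k)] = X := by
    funext i
    fin_cases i
    · simp [hv, map_ofNat]
      rw [← mul_assoc, ← map_ofNat (C : k →+* MvPolynomial (Fin 2) k) 2, ← C_mul]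
      norm_num
    · simp [hv]
  rw [h]
  exact MvPolynomial.algebraicIndependent_X (Fin 2) k
end

section
/- Let k be a field of characteristic 0. In the multivariate polynomial ring over k in eight variables X_{ij} (indexed by pairs (i,j) with 1 ≤ i,j ≤ 3 and (i,j) ≠ (3,3)), consider the generic traceless 3×3 matrix M whose (i,j)-entry is X_{ij} for (i,j) ≠ (3,3) and whose (3,3)-entry is −X_{11} − X_{22}. Then the two polynomials trace(M²) and trace(M³) are algebraically independent over k. -/
/-- The generic traceless 3×3 matrix: its `(i,j)` entry is the variable `X (i,j)`
for `(i,j) ≠ (3,3)`, and its `(3,3)` entry is `−X₁₁ − X₂₂` (indices here are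
`0,1,2` in `Fin 3`, so `(3,3)` corresponds to `(2,2) : Fin 3 × Fin 3`). -/
noncomputable def genericTraceless (k : Type*) [Field k] :
    Matrix (Fin 3) (Fin 3)
      (MvPolynomial {p : Fin 3 × Fin 3 // p ≠ (2, 2)} k) :=
  fun i j =>
    if h : (i, j) = ((2 : Fin 3), (2 : Fin 3)) then
      -(MvPolynomial.X ⟨((0 : Fin 3), (0 : Fin 3)), by decide⟩
        + MvPolynomial.X ⟨((1 : Fin 3), (1 : Fin 3)), by decide⟩)
    else
      MvPolynomial.X ⟨(i, j), h⟩

/-- The substitution sending the generic traceless matrix to the companion-type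
matrix `!![0,1,0; 0,0,1; t/3, s/2, 0]`. -/
noncomputable def subst (k : Type*) [Field k] :
    {p : Fin 3 × Fin 3 // p ≠ (2, 2)} → MvPolynomial (Fin 2) k := fun p =>
  if p.1 = ((0 : Fin 3), (1 : Fin 3)) then 1
  else if p.1 = ((1 : Fin 3), (2 : Fin 3)) then 1
  else if p.1 = ((2 : Fin 3), (0 : Fin 3)) then
    MvPolynomial.C (3 : k)⁻¹ * MvPolynomial.X 1
  else if p.1 = ((2 : Fin 3), (1 : Fin 3)) then
    MvPolynomial.C (2 : k)⁻¹ * MvPolynomial.X 0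
  else 0

lemma genericTraceless_map (k : Type*) [Field k] :
    (genericTraceless k).map (MvPolynomial.aeval (subst k)) =
      !![0, 1, 0; 0, 0, 1;
         MvPolynomial.C (3 : k)⁻¹ * MvPolynomial.X 1,
         MvPolynomial.C (2 : k)⁻¹ * MvPolynomial.X 0, 0] := by
  funext i j
  fin_cases i <;> fin_cases j <;>
    simp [genericTraceless, subst, Matrix.map_apply, Prod.ext_iff]

/-- For the generic traceless 3×3 matrix `M` over the polynomial ring in the eight
variables `X_{ij}`, `(i,j) ≠ (3,3)`, the polynomials `trace(M²)` and `trace(M³)`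
are algebraically independent over `k`. -/
theorem trace_sq_cube_algebraicIndependent (k : Type*) [Field k] [CharZero k] :
    AlgebraicIndependent k
      ![Matrix.trace (genericTraceless k * genericTraceless k),
        Matrix.trace (genericTraceless k * genericTraceless k * genericTraceless k)] := by
  classical
  set f := MvPolynomial.aeval (R := k) (subst k) with hf
  apply AlgebraicIndependent.of_comp f
  set N : Matrix (Fin 3) (Fin 3) (MvPolynomial (Fin 2) k) :=
    !![0, 1, 0; 0, 0, 1;
       MvPolynomial.C (3 : k)⁻¹ * MvPolynomial.X 1,
       MvPolynomial.C (2 : k)⁻¹ * MvPolynomial.X 0, 0] with hN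
  have h2 : (MvPolynomial.C (2 : k)⁻¹ + MvPolynomial.C (2 : k)⁻¹ :
      MvPolynomial (Fin 2) k) = 1 := by
    rw [← MvPolynomial.C_add, ← MvPolynomial.C_1]
    norm_num
  have h3 : (MvPolynomial.C (3 : k)⁻¹ + MvPolynomial.C (3 : k)⁻¹ +
      MvPolynomial.C (3 : k)⁻¹ : MvPolynomial (Fin 2) k) = 1 := by
    rw [← MvPolynomial.C_add, ← MvPolynomial.C_add, ← MvPolynomial.C_1]
    norm_num
  have keymap : ∀ A : Matrix (Fin 3) (Fin 3)
      (MvPolynomial {p : Fin 3 × Fin 3 // p ≠ (2, 2)} k),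
      f (Matrix.trace A) = Matrix.trace (A.map f) := by
    intro A
    simp only [Matrix.trace, map_sum]
    rfl
  have hmul : ∀ A B : Matrix (Fin 3) (Fin 3)
      (MvPolynomial {p : Fin 3 × Fin 3 // p ≠ (2, 2)} k),
      (A * B).map f = A.map f * B.map f := fun A B =>
    Matrix.map_mul (f := (f : MvPolynomial {p : Fin 3 × Fin 3 // p ≠ (2, 2)} k
      →+* MvPolynomial (Fin 2) k))
  have key : f ∘
      ![Matrix.trace (genericTraceless k * genericTraceless k),
        Matrix.trace (genericTraceless k * genericTraceless k * genericTraceless k)]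
      = MvPolynomial.X := by
    funext i
    fin_cases i
    · show f (Matrix.trace (genericTraceless k * genericTraceless k)) = MvPolynomial.X 0
      rw [keymap, hmul, genericTraceless_map]
      simp [Matrix.trace, Matrix.diag, Matrix.mul_apply, Fin.sum_univ_three]
      linear_combination MvPolynomial.X (R := k) 0 * h2
    · show f (Matrix.trace (genericTraceless k * genericTraceless k * genericTraceless k))
        = MvPolynomial.X 1
      rw [keymap, hmul, hmul, genericTraceless_map]
      simp [Matrix.trace, Matrix.diag, Matrix.mul_apply, Fin.sum_univ_three]
      linear_combination MvPolynomial.X (R := k) 1 * h3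
  rw [key]
  exact MvPolynomial.algebraicIndependent_X _ _
end
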